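/- Let t be a positive integer, let A be an m×n (0,1)-matrix, and let p be an integer with 0 ≤ p ≤ tm. Let l be the smallest nonnegative integer with tl ≥ n − p, and set q = tl − (n − p). Let A* be the (m+l) × t(m+l) (0,1)-matrix in block form A* = [[O_{l,tm−p}, J_{l,n}, J_{l,q}],[J_{m,tm−p}, A, O_{m,q}]], where J and O denote all-1s and all-0s matrices of the indicated sizes. Then ρ_t(A) ≥ p if and only if ρ_t(A*) = t(m+l). -/

import Mathlib

/-!
Both directions compare `ρ_t(A*)` with its row bound `t(m+l)`. The `t`-term rank is subadditive
over row blocks and over column blocks, so `ρ_t(A*) ≤ tl + (tm − p) + ρ_t(A) + 0`; hence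
`ρ_t(A*) = t(m+l)` forces `ρ_t(A) ≥ p`. Conversely, place a `t`-term selection of exactly `p`
ones of `A` in the `A`-block of `A*`. Its bottom rows miss `tm − p` ones in total, which go
greedily into the `tm − p` columns of `J_{m,tm−p}`; the top rows then take the `n − p` columns of
`A` left empty together with the `q` columns of `J_{l,q}`, which are exactly `tl` columns.
-/

open scoped BigOperators

/-- The `t`-term rank of a matrix `A` with entries in `ℕ`: the largest number of 1s of `A`
(equivalently, the largest sum `σ(B)` over `(0,1)`-matrices `B ≤ A`) with at most one 1 in
each column and at most `t` 1s in each row. -/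
noncomputable def tTermRank {α β : Type*} [Fintype α] [Fintype β] (t : ℕ)
    (A : Matrix α β ℕ) : ℕ :=
  sSup {k : ℕ | ∃ B : Matrix α β ℕ,
    (∀ i j, B i j ≤ A i j) ∧ (∀ i, ∑ j, B i j ≤ t) ∧ (∀ j, ∑ i, B i j ≤ 1) ∧
    k = ∑ i, ∑ j, B i j}

/-- The `(m+l) × t(m+l)` auxiliary matrix
`A* = [[O_{l,tm−p}, J_{l,n}, J_{l,q}], [J_{m,tm−p}, A, O_{m,q}]]`,
with rows indexed by `Fin l ⊕ Fin m` and columns by `Fin (tm−p) ⊕ (Fin n ⊕ Fin q)`. -/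
def auxMatrix {m n : ℕ} (t p l q : ℕ) (A : Matrix (Fin m) (Fin n) ℕ) :
    Matrix (Fin l ⊕ Fin m) (Fin (t * m - p) ⊕ (Fin n ⊕ Fin q)) ℕ :=
  fun i j =>
    match i, j with
    | Sum.inl _, Sum.inl _ => 0
    | Sum.inl _, Sum.inr (Sum.inl _) => 1
    | Sum.inl _, Sum.inr (Sum.inr _) => 1
    | Sum.inr i, Sum.inl _ => 1
    | Sum.inr i, Sum.inr (Sum.inl j) => A i j
    | Sum.inr _, Sum.inr (Sum.inr _) => 0

open Finset Matrix

theorem row_sum_add_single {α β : Type*} [Fintype β] [DecidableEq α] [DecidableEq β]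
    (B : Matrix α β ℕ) (i i' : α) (j : β) :
    ∑ k, (B + single i j 1 : Matrix α β ℕ) i' k = ∑ k, B i' k + if i = i' then 1 else 0 := by
  by_cases h : i = i' <;> simp [sum_add_distrib, single_apply, h]

theorem col_sum_add_single {α β : Type*} [Fintype α] [DecidableEq α] [DecidableEq β]
    (B : Matrix α β ℕ) (i : α) (j j' : β) :
    ∑ k, (B + single i j 1 : Matrix α β ℕ) k j' = ∑ k, B k j' + if j = j' then 1 else 0 := by
  by_cases h : j = j' <;> simp [sum_add_distrib, single_apply, h]

variable {α α₁ α₂ β β₁ β₂ : Type*} [Fintype α] [Fintype α₁] [Fintype α₂] [Fintype β]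
  [Fintype β₁] [Fintype β₂]

structure IsTTermSelection (t : ℕ) (A B : Matrix α β ℕ) : Prop where
  le : ∀ i j, B i j ≤ A i j
  row_sum_le : ∀ i, ∑ j, B i j ≤ t
  col_sum_le : ∀ j, ∑ i, B i j ≤ 1

namespace IsTTermSelection

variable {t : ℕ} {A B : Matrix α β ℕ}

theorem zero : IsTTermSelection t A 0 :=
  ⟨fun _ _ => Nat.zero_le _, by simp, by simp⟩

theorem mono (hB : IsTTermSelection t A B) {B' : Matrix α β ℕ} (h : ∀ i j, B' i j ≤ B i j) :
    IsTTermSelection t A B' where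
  le i j := (h i j).trans (hB.le i j)
  row_sum_le i := (sum_le_sum fun j _ => h i j).trans (hB.row_sum_le i)
  col_sum_le j := (sum_le_sum fun i _ => h i j).trans (hB.col_sum_le j)

theorem sum_le_card (hB : IsTTermSelection t A B) : ∑ i, ∑ j, B i j ≤ Fintype.card β :=
  calc ∑ i, ∑ j, B i j = ∑ j, ∑ i, B i j := sum_comm
    _ ≤ ∑ _j : β, 1 := sum_le_sum fun j _ => hB.col_sum_le j
    _ = Fintype.card β := by simp

theorem sum_le_mul_card (hB : IsTTermSelection t A B) :
    ∑ i, ∑ j, B i j ≤ t * Fintype.card α :=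
  calc ∑ i, ∑ j, B i j ≤ ∑ _i : α, t := sum_le_sum fun i _ => hB.row_sum_le i
    _ = t * Fintype.card α := by simp [mul_comm]

theorem card_filter_col_sum_eq_zero_add_sum (hB : IsTTermSelection t A B) :
    #{j | ∑ i, B i j = 0} + ∑ i, ∑ j, B i j = Fintype.card β := by
  rw [card_filter, sum_comm (f := fun i j => B i j), ← sum_add_distrib]
  refine (sum_congr rfl fun j _ => ?_).trans (card_eq_sum_ones _).symm
  rcases Nat.le_one_iff_eq_zero_or_eq_one.1 (hB.col_sum_le j) with h | h <;> simp [h]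

theorem row_sum_eq_of_le_sum (hB : IsTTermSelection t A B) {R : Finset α}
    (h : t * #R ≤ ∑ i ∈ R, ∑ j, B i j) : ∀ i ∈ R, ∑ j, B i j = t := by
  refine (sum_eq_sum_iff_of_le fun i _ => hB.row_sum_le i).1 (le_antisymm ?_ ?_)
  · exact sum_le_sum fun i _ => hB.row_sum_le i
  · simpa [mul_comm] using h

variable [DecidableEq α] [DecidableEq β]

theorem add_single (hB : IsTTermSelection t A B) {i : α} {j : β} (hA : 1 ≤ A i j)
    (hrow : ∑ k, B i k < t) (hcol : ∑ k, B k j = 0) :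
    IsTTermSelection t A (B + single i j 1) where
  le i' j' := by
    by_cases h : i = i' ∧ j = j'
    · obtain ⟨rfl, rfl⟩ := h
      simpa [(sum_eq_zero_iff.1 hcol) i (mem_univ _)] using hA
    · simpa [single_apply, h] using hB.le i' j'
  row_sum_le i' := by
    have := hB.row_sum_le i'
    by_cases h : i = i'
    · subst h; simp [sum_add_distrib, single_apply]; omega
    · simp [h, this]
  col_sum_le j' := by
    by_cases h : j = j'
    · subst h; simp [sum_add_distrib, single_apply, hcol]
    · simpa [sum_add_distrib, single_apply, h] using hB.col_sum_le j'

theorem exists_ge_row_sum_eq (hB : IsTTermSelection t A B) (R : Finset α) (S : Finset β)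
    (hA : ∀ i ∈ R, ∀ j ∈ S, 1 ≤ A i j) (hS : ∀ j ∈ S, ∑ i, B i j = 0)
    (hcard : t * #R ≤ ∑ i ∈ R, ∑ j, B i j + #S) :
    ∃ B', IsTTermSelection t A B' ∧ (∀ i j, B i j ≤ B' i j) ∧ (∀ i ∈ R, ∑ j, B' i j = t) ∧
      ∀ i, ∀ j ∉ S, B' i j = B i j := by
  induction S using Finset.induction_on generalizing B with
  | empty => exact ⟨B, hB, fun _ _ => le_rfl, hB.row_sum_eq_of_le_sum (by simpa using hcard),
      fun _ _ _ => rfl⟩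
  | insert j S hj ih =>
    by_cases hfull : t * #R ≤ ∑ i ∈ R, ∑ j, B i j
    · exact ⟨B, hB, fun _ _ => le_rfl, hB.row_sum_eq_of_le_sum hfull, fun _ _ _ => rfl⟩
    obtain ⟨i, hi, hlt⟩ : ∃ i ∈ R, ∑ k, B i k < t :=
      exists_lt_of_sum_lt (by simpa [mul_comm] using hfull)
    have hjS := mem_insert_self j S
    obtain ⟨B', hB', hle, hrow, hoff⟩ :=
      ih (hB.add_single (hA i hi j hjS) hlt (hS j hjS))
        (fun i hi j hj => hA i hi j (mem_insert_of_mem hj))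
        (fun j' hj' => by
          rw [col_sum_add_single, hS j' (mem_insert_of_mem hj'),
            if_neg (ne_of_mem_of_not_mem hj' hj).symm])
        (by
          rw [sum_congr rfl fun i' _ => row_sum_add_single B i i' j, sum_add_distrib, sum_ite_eq,
            if_pos hi]
          rw [card_insert_of_notMem hj] at hcard
          omega)
    refine ⟨B', hB', fun i' j' => le_trans (by simp) (hle i' j'), hrow, fun i' j' hj' => ?_⟩
    rw [hoff i' j' (fun h => hj' (mem_insert_of_mem h))]
    have hjj' : j ≠ j' := ne_of_mem_of_not_mem (mem_insert_self j S) hj'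
    simp [hjj']

end IsTTermSelection

section tTermRank

variable (t : ℕ)

theorem tTermRank_eq_sSup (A : Matrix α β ℕ) :
    tTermRank t A = sSup ((fun B => ∑ i, ∑ j, B i j) '' {B | IsTTermSelection t A B}) := by
  unfold tTermRank
  congr 1
  ext k
  constructor
  · rintro ⟨B, h₁, h₂, h₃, rfl⟩
    exact ⟨B, ⟨h₁, h₂, h₃⟩, rfl⟩
  · rintro ⟨B, ⟨h₁, h₂, h₃⟩, rfl⟩
    exact ⟨B, h₁, h₂, h₃, rfl⟩

theorem bddAbove_isTTermSelection_sums (A : Matrix α β ℕ) :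
    BddAbove ((fun B => ∑ i, ∑ j, B i j) '' {B | IsTTermSelection t A B}) :=
  ⟨Fintype.card β, by rintro _ ⟨B, hB, rfl⟩; exact hB.sum_le_card⟩

theorem IsTTermSelection.sum_le_tTermRank {t : ℕ} {A B : Matrix α β ℕ}
    (hB : IsTTermSelection t A B) : ∑ i, ∑ j, B i j ≤ tTermRank t A := by
  rw [tTermRank_eq_sSup]
  exact le_csSup (bddAbove_isTTermSelection_sums t A) ⟨B, hB, rfl⟩

theorem exists_isTTermSelection_sum_eq_tTermRank (A : Matrix α β ℕ) :
    ∃ B, IsTTermSelection t A B ∧ ∑ i, ∑ j, B i j = tTermRank t A := by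
  rw [tTermRank_eq_sSup]
  exact Nat.sSup_mem (Set.Nonempty.image _ ⟨0, IsTTermSelection.zero⟩)
    (bddAbove_isTTermSelection_sums t A)

theorem exists_isTTermSelection_sum_eq {A : Matrix α β ℕ} {k : ℕ} (hk : k ≤ tTermRank t A) :
    ∃ B, IsTTermSelection t A B ∧ ∑ i, ∑ j, B i j = k := by
  obtain ⟨C, hC, hsum⟩ := exists_isTTermSelection_sum_eq_tTermRank t A
  let f : α × β →₀ ℕ := Finsupp.equivFunOnFinite.symm fun x => C x.1 x.2
  have hf : f.degree = tTermRank t A := by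
    rw [Finsupp.degree_eq_sum, ← hsum, Fintype.sum_prod_type]
    rfl
  obtain ⟨g, hg, hdeg⟩ := f.exists_le_degree_eq k (hf ▸ hk)
  refine ⟨fun i j => g (i, j), hC.mono fun i j => hg (i, j), ?_⟩
  rw [← hdeg, Finsupp.degree_eq_sum, Fintype.sum_prod_type]

theorem tTermRank_le_mul_card (A : Matrix α β ℕ) : tTermRank t A ≤ t * Fintype.card α := by
  obtain ⟨B, hB, hsum⟩ := exists_isTTermSelection_sum_eq_tTermRank t A
  exact hsum ▸ hB.sum_le_mul_card

theorem tTermRank_le_card (A : Matrix α β ℕ) : tTermRank t A ≤ Fintype.card β := by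
  obtain ⟨B, hB, hsum⟩ := exists_isTTermSelection_sum_eq_tTermRank t A
  exact hsum ▸ hB.sum_le_card

@[simp]
theorem tTermRank_zero : tTermRank t (0 : Matrix α β ℕ) = 0 := by
  obtain ⟨B, hB, hsum⟩ := exists_isTTermSelection_sum_eq_tTermRank t (0 : Matrix α β ℕ)
  simp [← hsum, fun i j => Nat.le_zero.1 (hB.le i j)]

theorem tTermRank_fromRows_le (A₁ : Matrix α₁ β ℕ) (A₂ : Matrix α₂ β ℕ) :
    tTermRank t (fromRows A₁ A₂) ≤ tTermRank t A₁ + tTermRank t A₂ := by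
  obtain ⟨C, hC, hsum⟩ := exists_isTTermSelection_sum_eq_tTermRank t (fromRows A₁ A₂)
  have hcol j : ∑ i, C (.inl i) j + ∑ i, C (.inr i) j ≤ 1 := by
    simpa [Fintype.sum_sum_type] using hC.col_sum_le j
  have h₁ : IsTTermSelection t A₁ C.toRows₁ :=
    ⟨fun i j => hC.le (.inl i) j, fun i => hC.row_sum_le _, fun j => le_of_add_le_left (hcol j)⟩
  have h₂ : IsTTermSelection t A₂ C.toRows₂ :=
    ⟨fun i j => hC.le (.inr i) j, fun i => hC.row_sum_le _, fun j => le_of_add_le_right (hcol j)⟩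
  rw [← hsum, Fintype.sum_sum_type]
  exact add_le_add h₁.sum_le_tTermRank h₂.sum_le_tTermRank

theorem tTermRank_fromCols_le (A₁ : Matrix α β₁ ℕ) (A₂ : Matrix α β₂ ℕ) :
    tTermRank t (fromCols A₁ A₂) ≤ tTermRank t A₁ + tTermRank t A₂ := by
  obtain ⟨C, hC, hsum⟩ := exists_isTTermSelection_sum_eq_tTermRank t (fromCols A₁ A₂)
  have hrow i : ∑ j, C i (.inl j) + ∑ j, C i (.inr j) ≤ t := by
    simpa [Fintype.sum_sum_type] using hC.row_sum_le i
  have h₁ : IsTTermSelection t A₁ C.toCols₁ :=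
    ⟨fun i j => hC.le i (.inl j), fun i => le_of_add_le_left (hrow i), fun j => hC.col_sum_le _⟩
  have h₂ : IsTTermSelection t A₂ C.toCols₂ :=
    ⟨fun i j => hC.le i (.inr j), fun i => le_of_add_le_right (hrow i), fun j => hC.col_sum_le _⟩
  simp only [← hsum, Fintype.sum_sum_type, sum_add_distrib]
  exact add_le_add h₁.sum_le_tTermRank h₂.sum_le_tTermRank

end tTermRank

section auxMatrix

variable {m n : ℕ} {t p l q : ℕ} {A : Matrix (Fin m) (Fin n) ℕ}

theorem auxMatrix_eq_fromRows :
    auxMatrix t p l q A = fromRows (fromCols 0 (of fun _ _ => 1))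
      (fromCols (of fun _ _ => 1) (fromCols A 0)) := by
  ext (i | i) (c | j | x) <;> rfl

theorem tTermRank_auxMatrix_le :
    tTermRank t (auxMatrix t p l q A) ≤ t * l + (t * m - p + tTermRank t A) := by
  rw [auxMatrix_eq_fromRows]
  refine (tTermRank_fromRows_le t _ _).trans (add_le_add ?_ ?_)
  · simpa using tTermRank_le_mul_card t (fromCols (0 : Matrix (Fin l) _ ℕ) (of fun _ _ => 1))
  · refine (tTermRank_fromCols_le t _ _).trans (add_le_add ?_ ?_)
    · simpa using tTermRank_le_card t (of fun (_ : Fin m) (_ : Fin (t * m - p)) => 1)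
    · simpa using tTermRank_fromCols_le t A (0 : Matrix (Fin m) (Fin q) ℕ)

theorem le_tTermRank_auxMatrix (hp : p ≤ t * m) (hl : n ≤ t * l + p) (hq : q = t * l + p - n)
    (hrank : p ≤ tTermRank t A) : t * (m + l) ≤ tTermRank t (auxMatrix t p l q A) := by
  obtain ⟨B₀, hB₀, hsum⟩ := exists_isTTermSelection_sum_eq t hrank
  let B₁ : Matrix (Fin l ⊕ Fin m) (Fin (t * m - p) ⊕ (Fin n ⊕ Fin q)) ℕ :=
    fromRows 0 (fromCols 0 (fromCols B₀ 0))
  have hB₁ : IsTTermSelection t (auxMatrix t p l q A) B₁ := by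
    refine ⟨?_, ?_, ?_⟩
    · rintro (i | i) (c | j | x) <;> simp [B₁, auxMatrix, hB₀.le]
    · rintro (i | i) <;> simp [B₁, Fintype.sum_sum_type, hB₀.row_sum_le]
    · rintro (c | j | x) <;> simp [B₁, Fintype.sum_sum_type, hB₀.col_sum_le]
  obtain ⟨B₂, hB₂, -, hbottom, hoff⟩ :=
    hB₁.exists_ge_row_sum_eq (univ.map Function.Embedding.inr) (univ.map Function.Embedding.inl)
      (by simp [auxMatrix]) (by simp [B₁]) (by simp [B₁, sum_map, hsum]; omega)
  have hfree c : ∑ r, B₂ r (.inr c) = ∑ r, B₁ r (.inr c) :=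
    sum_congr rfl fun r _ => hoff r _ (by simp)
  have hcount : #{c | ∑ r, B₂ r (.inr c) = 0} = #{j | ∑ i, B₀ i j = 0} + q := by
    simp only [card_filter, Fintype.sum_sum_type, hfree]
    simp [B₁]
  have hn := hB₀.card_filter_col_sum_eq_zero_add_sum
  rw [hsum, Fintype.card_fin] at hn
  obtain ⟨B₃, hB₃, hB₂₃, htop, -⟩ :=
    hB₂.exists_ge_row_sum_eq (univ.map Function.Embedding.inl)
      ((univ.filter fun c => ∑ r, B₂ r (.inr c) = 0).map Function.Embedding.inr)
      (by
        simp only [mem_map]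
        rintro _ ⟨i, -, rfl⟩ _ ⟨c | x, -, rfl⟩ <;> simp [auxMatrix])
      (by simp) (by simp only [card_map, hcount, card_univ, Fintype.card_fin]; omega)
  have hrow r : ∑ c, B₃ r c = t := by
    rcases r with i | i
    · exact htop _ (by simp)
    · refine le_antisymm (hB₃.row_sum_le _) ?_
      calc t = ∑ c, B₂ (.inr i) c := (hbottom (.inr i) (by simp)).symm
        _ ≤ ∑ c, B₃ (.inr i) c := sum_le_sum fun c _ => hB₂₃ _ c
  calc t * (m + l) = ∑ r, ∑ c, B₃ r c := by simp [hrow]; ring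
    _ ≤ _ := hB₃.sum_le_tTermRank

end auxMatrix

theorem t_term_rank_ge_iff_aux_full_general (m n t : ℕ)
    (A : Matrix (Fin m) (Fin n) ℕ)
    (p : ℕ) (hp : p ≤ t * m)
    (l : ℕ) (hl : n ≤ t * l + p)
    (q : ℕ) (hq : q = t * l + p - n) :
    p ≤ tTermRank t A ↔ tTermRank t (auxMatrix t p l q A) = t * (m + l) := by
  have hle : tTermRank t (auxMatrix t p l q A) ≤ t * (m + l) := by
    simpa [add_comm] using tTermRank_le_mul_card t (auxMatrix t p l q A)
  refine ⟨fun h => le_antisymm hle (le_tTermRank_auxMatrix hp hl hq h), fun h => ?_⟩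
  have hupper := tTermRank_auxMatrix_le (t := t) (p := p) (l := l) (q := q) (A := A)
  rw [h, mul_add] at hupper
  omega

/-- With `0 ≤ p ≤ tm`, `l` the smallest nonnegative integer with `tl ≥ n − p`, and
`q = tl − (n − p)`, one has `ρ_t(A) ≥ p` iff `ρ_t(A*) = t(m+l)`. -/
theorem t_term_rank_ge_iff_aux_full (m n t : ℕ) (ht : 0 < t)
    (A : Matrix (Fin m) (Fin n) ℕ) (hA : ∀ i j, A i j ≤ 1)
    (p : ℕ) (hp : p ≤ t * m)
    (l : ℕ) (hl : n ≤ t * l + p) (hlmin : ∀ l' : ℕ, n ≤ t * l' + p → l ≤ l')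
    (q : ℕ) (hq : q = t * l + p - n) :
    p ≤ tTermRank t A ↔ tTermRank t (auxMatrix t p l q A) = t * (m + l) :=
  t_term_rank_ge_iff_aux_full_general m n t A p hp l hl q hq
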